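/- Let X be a finite set, σ₁, …, σ_r commuting involutions of X, and ε₁, …, ε_r ∈ {+1, −1}. Let W = {f : X → ℂ | f ∘ σᵢ = εᵢ · f for all i} and W⁺ = {f : X → ℂ | f ∘ σᵢ = f for all i}. Then dim_ℂ W ≤ dim_ℂ W⁺. -/

import Mathlib

/-!
Call two points of `X` equivalent when one is reached from the other by applying the `σ i`.
A joint eigenvector with nonzero eigenvalues is determined by its values on one
representative of each class, because along a class its value only gets multiplied by
nonzero scalars; conversely every function of the classes is a joint `(+1,…,+1)`-eigenvector.
So both dimensions are compared with the number of classes.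
-/

/-- The joint eigenspace `{f : X → ℂ | f ∘ σ i = ε i • f for all i}` as a subspace of
the space of functions `X → ℂ`. -/
noncomputable def jointEigenspace {X : Type*} {r : ℕ} (σ : Fin r → X → X) (ε : Fin r → ℂ) :
    Submodule ℂ (X → ℂ) where
  carrier := {f | ∀ (i : Fin r) (x : X), f (σ i x) = ε i * f x}
  add_mem' := by
    intro f g hf hg i x
    simp only [Pi.add_apply, hf i x, hg i x]
    ring
  zero_mem' := by intro i x; simp
  smul_mem' := by
    intro c f hf i x
    simp only [Pi.smul_apply, smul_eq_mul, hf i x]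
    ring

section Orbits

variable {X : Type*} {r : ℕ}

def orbitStep (σ : Fin r → X → X) (x y : X) : Prop := ∃ i, y = σ i x

theorem eq_zero_iff_of_eqvGen_orbitStep {σ : Fin r → X → X} {ε : Fin r → ℂ}
    (hε : ∀ i, ε i ≠ 0) {f : X → ℂ} (hf : f ∈ jointEigenspace σ ε) {x y : X}
    (hxy : Relation.EqvGen (orbitStep σ) x y) : f x = 0 ↔ f y = 0 := by
  induction hxy with
  | rel x _ hstep =>
    obtain ⟨i, rfl⟩ := hstep
    rw [hf i x, mul_eq_zero, or_iff_right (hε i)]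
  | refl => rfl
  | symm _ _ _ ih => exact ih.symm
  | trans _ _ _ _ _ ih₁ ih₂ => exact ih₁.trans ih₂

noncomputable def restrictToOrbitReps (σ : Fin r → X → X) (ε : Fin r → ℂ) :
    jointEigenspace σ ε →ₗ[ℂ] (Quot (orbitStep σ) → ℂ) :=
  (LinearMap.funLeft ℂ ℂ Quot.out).comp (jointEigenspace σ ε).subtype

theorem restrictToOrbitReps_injective (σ : Fin r → X → X) {ε : Fin r → ℂ}
    (hε : ∀ i, ε i ≠ 0) : Function.Injective (restrictToOrbitReps σ ε) := by
  refine (injective_iff_map_eq_zero _).mpr fun f hf => Subtype.ext (funext fun x => ?_)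
  have hrep : Relation.EqvGen (orbitStep σ) (Quot.mk _ x).out x :=
    Quot.eqvGen_exact (Quot.out_eq _)
  exact (eq_zero_iff_of_eqvGen_orbitStep hε f.2 hrep).mp (congrFun hf (Quot.mk _ x))

noncomputable def liftFromOrbits (σ : Fin r → X → X) :
    (Quot (orbitStep σ) → ℂ) →ₗ[ℂ] jointEigenspace σ (fun _ => 1) :=
  LinearMap.codRestrict _ (LinearMap.funLeft ℂ ℂ (Quot.mk _)) fun g i x => by
    simp only [LinearMap.funLeft_apply, one_mul]
    exact congrArg g (Quot.sound ⟨i, rfl⟩).symm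

theorem liftFromOrbits_injective (σ : Fin r → X → X) :
    Function.Injective (liftFromOrbits σ) := fun _ _ h =>
  LinearMap.funLeft_injective_of_surjective ℂ ℂ _ Quot.mk_surjective (congrArg Subtype.val h)

end Orbits

theorem stmt18_general {X : Type*} [Fintype X] {r : ℕ} (σ : Fin r → X → X)
    (ε : Fin r → ℂ) (hε : ∀ i, ε i = 1 ∨ ε i = -1) :
    Module.finrank ℂ (jointEigenspace σ ε) ≤
      Module.finrank ℂ (jointEigenspace σ (fun _ => 1)) := by
  have hε₀ : ∀ i, ε i ≠ 0 := fun i => by rcases hε i with h | h <;> simp [h]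
  calc Module.finrank ℂ (jointEigenspace σ ε)
      ≤ Module.finrank ℂ (Quot (orbitStep σ) → ℂ) :=
        LinearMap.finrank_le_finrank_of_injective (restrictToOrbitReps_injective σ hε₀)
    _ ≤ Module.finrank ℂ (jointEigenspace σ (fun _ => 1)) :=
        LinearMap.finrank_le_finrank_of_injective (liftFromOrbits_injective σ)

/-- For commuting involutions `σ₁, …, σ_r` of a finite set and signs `ε i ∈ {±1}`, the
joint `ε`-eigenspace of functions `X → ℂ` has dimension at most that of the joint
`(+1,…,+1)`-eigenspace. -/
theorem stmt18 {X : Type*} [Fintype X] {r : ℕ} (σ : Fin r → X → X)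
    (hinv : ∀ i, σ i ∘ σ i = id) (hcomm : ∀ i j, σ i ∘ σ j = σ j ∘ σ i)
    (ε : Fin r → ℂ) (hε : ∀ i, ε i = 1 ∨ ε i = -1) :
    Module.finrank ℂ (jointEigenspace σ ε) ≤
      Module.finrank ℂ (jointEigenspace σ (fun _ => 1)) :=
  stmt18_general σ ε hε
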